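/- Let p ∈ ℝ and let r₁, a₂, ℰ, 𝓘 ∈ ℝ be such that r₁² + a₂² − 2a₂(r₁𝓘 sin ζ + a₂ℰ cos ζ) + a₂²ℰ²cos²ζ > 0 for every ζ ∈ ℝ. Then g_p is even separately in ℰ and in 𝓘: g_p(r₁, a₂, −ℰ, 𝓘) = g_p(r₁, a₂, ℰ, 𝓘) and g_p(r₁, a₂, ℰ, −𝓘) = g_p(r₁, a₂, ℰ, 𝓘). -/
import Mathlib


open Real intervalIntegral

/-- The function `g_p(r₁,a₂,ℰ,𝓘)`. -/
noncomputable def gp (p r₁ a₂ ℰ 𝓘 : ℝ) : ℝ :=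
  (1 / (2 * π)) * ∫ ζ in (0:ℝ)..(2 * π),
    (1 - ℰ * Real.cos ζ) *
      (r₁ ^ 2 + a₂ ^ 2 - 2 * a₂ * (r₁ * 𝓘 * Real.sin ζ + a₂ * ℰ * Real.cos ζ) +
        a₂ ^ 2 * ℰ ^ 2 * Real.cos ζ ^ 2) ^ (-p)

private noncomputable def gpF (p r₁ a₂ ℰ 𝓘 : ℝ) (ζ : ℝ) : ℝ :=
  (1 - ℰ * Real.cos ζ) *
    (r₁ ^ 2 + a₂ ^ 2 - 2 * a₂ * (r₁ * 𝓘 * Real.sin ζ + a₂ * ℰ * Real.cos ζ) +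
      a₂ ^ 2 * ℰ ^ 2 * Real.cos ζ ^ 2) ^ (-p)

private lemma gpF_periodic (p r₁ a₂ ℰ 𝓘 : ℝ) :
    Function.Periodic (gpF p r₁ a₂ ℰ 𝓘) (2 * π) := by
  intro ζ
  simp [gpF, Real.cos_add_two_pi, Real.sin_add_two_pi]

private lemma gp_eq (p r₁ a₂ ℰ 𝓘 : ℝ) :
    gp p r₁ a₂ ℰ 𝓘 = (1 / (2 * π)) * ∫ ζ in (0:ℝ)..(2 * π), gpF p r₁ a₂ ℰ 𝓘 ζ := rfl

private lemma gp_neg_I (p r₁ a₂ ℰ 𝓘 : ℝ) :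
    gp p r₁ a₂ ℰ (-𝓘) = gp p r₁ a₂ ℰ 𝓘 := by
  rw [gp_eq, gp_eq]
  congr 1
  have h1 : ∀ ζ : ℝ, gpF p r₁ a₂ ℰ (-𝓘) ζ = gpF p r₁ a₂ ℰ 𝓘 (-ζ) := by
    intro ζ; simp [gpF]
  calc (∫ ζ in (0:ℝ)..(2 * π), gpF p r₁ a₂ ℰ (-𝓘) ζ)
      = ∫ ζ in (0:ℝ)..(2 * π), gpF p r₁ a₂ ℰ 𝓘 (-ζ) := by
        exact intervalIntegral.integral_congr (fun ζ _ => h1 ζ)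
    _ = ∫ ζ in (-(2 * π))..(-(0:ℝ)), gpF p r₁ a₂ ℰ 𝓘 ζ :=
        intervalIntegral.integral_comp_neg _
    _ = ∫ ζ in (0:ℝ)..(2 * π), gpF p r₁ a₂ ℰ 𝓘 ζ := by
        have := (gpF_periodic p r₁ a₂ ℰ 𝓘).intervalIntegral_add_eq (-(2 * π)) 0
        simpa using this

private lemma gp_neg_E (p r₁ a₂ ℰ 𝓘 : ℝ) :
    gp p r₁ a₂ (-ℰ) 𝓘 = gp p r₁ a₂ ℰ (-𝓘) := by
  rw [gp_eq, gp_eq]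
  congr 1
  have h1 : ∀ ζ : ℝ, gpF p r₁ a₂ (-ℰ) 𝓘 ζ = gpF p r₁ a₂ ℰ (-𝓘) (ζ + π) := by
    intro ζ; simp [gpF, Real.cos_add, Real.sin_add]
  calc (∫ ζ in (0:ℝ)..(2 * π), gpF p r₁ a₂ (-ℰ) 𝓘 ζ)
      = ∫ ζ in (0:ℝ)..(2 * π), gpF p r₁ a₂ ℰ (-𝓘) (ζ + π) := by
        exact intervalIntegral.integral_congr (fun ζ _ => h1 ζ)
    _ = ∫ ζ in (0 + π)..(2 * π + π), gpF p r₁ a₂ ℰ (-𝓘) ζ :=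
        intervalIntegral.integral_comp_add_right _ _
    _ = ∫ ζ in (π)..(π + 2 * π), gpF p r₁ a₂ ℰ (-𝓘) ζ := by
        norm_num; ring_nf
    _ = ∫ ζ in (0:ℝ)..(2 * π), gpF p r₁ a₂ ℰ (-𝓘) ζ := by
        have := (gpF_periodic p r₁ a₂ ℰ (-𝓘)).intervalIntegral_add_eq π 0
        simpa using this

/-- `g_p` is even separately in `ℰ` and in `𝓘`. -/
theorem stmt_16 (p r₁ a₂ ℰ 𝓘 : ℝ)
    (hpos : ∀ ζ : ℝ,
      0 < r₁ ^ 2 + a₂ ^ 2 - 2 * a₂ * (r₁ * 𝓘 * Real.sin ζ + a₂ * ℰ * Real.cos ζ) +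
        a₂ ^ 2 * ℰ ^ 2 * Real.cos ζ ^ 2) :
    gp p r₁ a₂ (-ℰ) 𝓘 = gp p r₁ a₂ ℰ 𝓘 ∧ gp p r₁ a₂ ℰ (-𝓘) = gp p r₁ a₂ ℰ 𝓘 := by
  exact ⟨(gp_neg_E p r₁ a₂ ℰ 𝓘).trans (gp_neg_I p r₁ a₂ ℰ 𝓘), gp_neg_I p r₁ a₂ ℰ 𝓘⟩
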